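/- Let c₁ > 0, t ≥ 1, and let h : [0,t] → ℝ be C² with h''(k) ≥ c₁ t ⟨k⟩^{-3} for all k ∈ [0,t]. Define H(k) = ∫₀^k e^{ih(s)} ds. Then there is a constant c > 0 depending only on c₁ such that |H(k)| ≤ c t^{-1/2} ⟨k⟩^{3/2} for all k ∈ [0,t]. -/

import Mathlib

/-!
If the phase `h` has monotone derivative `φ` with `|φ| ≥ δ`, write `e^{ih} = (iφ)⁻¹ (e^{ih})'`
and integrate by parts: since `1/φ` is monotone, its total variation is controlled by its endpoint
values, and `‖∫ e^{ih}‖ ≤ 4/δ`. If `h'' ≥ λ > 0`, then `φ = h'` increases at rate `λ`, so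
`|φ| < √λ` only on an interval of length at most `2/√λ`; bounding the integral trivially there and
by the first estimate with `δ = √λ` on the two remaining pieces gives `‖∫ e^{ih}‖ ≤ 10/√λ`.
On `[0, k]` the hypothesis gives `h'' ≥ λ = c₁ t ⟨k⟩⁻³`, whence `c = 10/√c₁`.
-/

open Set MeasureTheory intervalIntegral Complex

theorem norm_integral_smul_deriv_le_of_deriv_nonneg {E : Type*} [NormedAddCommGroup E]
    [NormedSpace ℝ E] [CompleteSpace E] {a b C : ℝ} (hab : a ≤ b) {g g' : ℝ → ℝ} {v v' : ℝ → E}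
    (hg : ∀ x ∈ Icc a b, HasDerivWithinAt g (g' x) (Icc a b) x)
    (hv : ∀ x ∈ Icc a b, HasDerivWithinAt v (v' x) (Icc a b) x)
    (hg' : IntervalIntegrable g' volume a b) (hv' : IntervalIntegrable v' volume a b)
    (hg'_nonneg : ∀ x ∈ Icc a b, 0 ≤ g' x) (hv_le : ∀ x ∈ Icc a b, ‖v x‖ ≤ C) :
    ‖∫ x in a..b, g x • v' x‖ ≤ 2 * C * (|g a| + |g b|) := by
  have ha : a ∈ Icc a b := left_mem_Icc.2 hab
  have hb : b ∈ Icc a b := right_mem_Icc.2 hab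
  have hC : 0 ≤ C := (norm_nonneg _).trans (hv_le a ha)
  have hvar : ∫ x in a..b, g' x = g b - g a :=
    integral_eq_sub_of_hasDeriv_right_of_le hab (fun x hx ↦ (hg x hx).continuousWithinAt)
      (fun x hx ↦ ((hg x (Ioo_subset_Icc_self hx)).hasDerivAt
        (Icc_mem_nhds hx.1 hx.2)).hasDerivWithinAt) hg'
  have hrest : ‖∫ x in a..b, g' x • v x‖ ≤ (g b - g a) * C := by
    rw [← hvar, ← intervalIntegral.integral_mul_const]
    refine norm_integral_le_of_norm_le hab (Filter.Eventually.of_forall fun x hx ↦ ?_)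
      (hg'.mul_const C)
    have hx : x ∈ Icc a b := Ioc_subset_Icc_self hx
    rw [norm_smul, Real.norm_of_nonneg (hg'_nonneg x hx)]
    exact mul_le_mul_of_nonneg_left (hv_le x hx) (hg'_nonneg x hx)
  rw [← uIcc_of_le hab] at hg hv
  rw [integral_smul_deriv_eq_deriv_smul_of_hasDerivWithinAt hg hv hg' hv']
  calc ‖g b • v b - g a • v a - ∫ x in a..b, g' x • v x‖
      ≤ |g b| * C + |g a| * C + (g b - g a) * C := by
        refine norm_sub_le_of_le (norm_sub_le_of_le ?_ ?_) hrest <;>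
          rw [norm_smul, Real.norm_eq_abs] <;> gcongr <;> exact hv_le _ ‹_›
    _ ≤ 2 * C * (|g a| + |g b|) := by
        nlinarith [le_abs_self (g b), neg_abs_le (g a)]

theorem norm_integral_cexp_le_of_abs_deriv_ge {a b δ : ℝ} (hab : a ≤ b) (hδ : 0 < δ)
    {h φ ψ : ℝ → ℝ} (hh : ∀ x ∈ Icc a b, HasDerivWithinAt h (φ x) (Icc a b) x)
    (hφ : ∀ x ∈ Icc a b, HasDerivWithinAt φ (ψ x) (Icc a b) x)
    (hψ : ContinuousOn ψ (Icc a b)) (hψ_nonneg : ∀ x ∈ Icc a b, 0 ≤ ψ x)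
    (hφ_ge : ∀ x ∈ Icc a b, δ ≤ |φ x|) :
    ‖∫ x in a..b, exp (I * h x)‖ ≤ 4 / δ := by
  have hφ_ne : ∀ x ∈ Icc a b, φ x ≠ 0 := fun x hx ↦ abs_pos.1 (hδ.trans_le (hφ_ge x hx))
  have hφc : ContinuousOn φ (Icc a b) := fun x hx ↦ (hφ x hx).continuousWithinAt
  have hv : ∀ x ∈ Icc a b, HasDerivWithinAt (fun y ↦ exp (I * h y))
      (exp (I * h x) * (I * φ x)) (Icc a b) x :=
    fun x hx ↦ ((hh x hx).ofReal_comp.const_mul I).cexp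
  have hg : ∀ x ∈ Icc a b, HasDerivWithinAt (fun y ↦ -(φ y)⁻¹) (ψ x / φ x ^ 2) (Icc a b) x := by
    intro x hx
    simpa only [neg_div, neg_neg] using ((hφ x hx).fun_inv (hφ_ne x hx)).fun_neg
  have hg_le : ∀ x ∈ Icc a b, |-(φ x)⁻¹| ≤ δ⁻¹ := fun x hx ↦ by
    rw [abs_neg, abs_inv]; exact inv_anti₀ hδ (hφ_ge x hx)
  have hv' : ContinuousOn (fun x ↦ exp (I * h x) * (I * φ x)) (Icc a b) :=
    ContinuousOn.mul (fun x hx ↦ (hv x hx).continuousWithinAt)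
      (continuousOn_const.mul (continuous_ofReal.comp_continuousOn hφc))
  have hg' : ContinuousOn (fun x ↦ ψ x / φ x ^ 2) (Icc a b) :=
    hψ.div (hφc.pow 2) fun x hx ↦ pow_ne_zero 2 (hφ_ne x hx)
  have hintegrand : ∫ x in a..b, exp (I * h x) =
      I * ∫ x in a..b, (-(φ x)⁻¹) • (exp (I * h x) * (I * φ x)) := by
    rw [← intervalIntegral.integral_const_mul]
    refine integral_congr fun x hx ↦ ?_
    rw [uIcc_of_le hab] at hx
    have : (φ x : ℂ) ≠ 0 := ofReal_ne_zero.2 (hφ_ne x hx)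
    rw [real_smul, ofReal_neg, ofReal_inv]
    field_simp
    simp [I_sq]
  calc ‖∫ x in a..b, exp (I * h x)‖
      = ‖∫ x in a..b, (-(φ x)⁻¹) • (exp (I * h x) * (I * φ x))‖ := by
        rw [hintegrand, norm_mul, norm_I, one_mul]
    _ ≤ 2 * 1 * (|-(φ a)⁻¹| + |-(φ b)⁻¹|) :=
        norm_integral_smul_deriv_le_of_deriv_nonneg hab hg hv (hg'.intervalIntegrable_of_Icc hab)
          (hv'.intervalIntegrable_of_Icc hab)
          (fun x hx ↦ div_nonneg (hψ_nonneg x hx) (sq_nonneg _))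
          (fun x _ ↦ (norm_exp_I_mul_ofReal _).le)
    _ ≤ 2 * 1 * (δ⁻¹ + δ⁻¹) := by
        gcongr
        · exact hg_le a (left_mem_Icc.2 hab)
        · exact hg_le b (right_mem_Icc.2 hab)
    _ = 4 / δ := by ring

theorem mul_sub_le_sub_of_hasDerivWithinAt_Icc {a b C : ℝ} {φ ψ : ℝ → ℝ}
    (hφ : ∀ x ∈ Icc a b, HasDerivWithinAt φ (ψ x) (Icc a b) x) (hψ : ∀ x ∈ Icc a b, C ≤ ψ x) :
    ∀ x ∈ Icc a b, ∀ y ∈ Icc a b, x ≤ y → C * (y - x) ≤ φ y - φ x := by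
  have hφ' : ∀ x ∈ Ioo a b, HasDerivAt φ (ψ x) x := fun x hx ↦
    (hφ x (Ioo_subset_Icc_self hx)).hasDerivAt (Icc_mem_nhds hx.1 hx.2)
  refine (convex_Icc a b).mul_sub_le_image_sub_of_le_deriv
    (fun x hx ↦ (hφ x hx).continuousWithinAt) ?_ fun x hx ↦ ?_
  · exact fun x hx ↦ (hφ' x (by rwa [interior_Icc] at hx)).differentiableAt.differentiableWithinAt
  · rw [interior_Icc] at hx
    rw [(hφ' x hx).deriv]
    exact hψ x (Ioo_subset_Icc_self hx)

theorem ContinuousOn.exists_mem_Icc_crossing {a b y : ℝ} {φ : ℝ → ℝ} (hab : a ≤ b)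
    (hφ : ContinuousOn φ (Icc a b)) :
    ∃ p ∈ Icc a b, (p = a ∨ φ p ≤ y) ∧ (p = b ∨ y ≤ φ p) := by
  by_cases hya : y ≤ φ a
  · exact ⟨a, left_mem_Icc.2 hab, Or.inl rfl, Or.inr hya⟩
  by_cases hby : φ b ≤ y
  · exact ⟨b, right_mem_Icc.2 hab, Or.inr hby, Or.inl rfl⟩
  obtain ⟨p, hp, hφp⟩ := intermediate_value_Icc hab hφ ⟨(not_le.1 hya).le, (not_le.1 hby).le⟩
  exact ⟨p, hp, Or.inr hφp.le, Or.inr hφp.ge⟩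

theorem norm_integral_le_add_add {E : Type*} [NormedAddCommGroup E] [NormedSpace ℝ E]
    {f : ℝ → E} {a b p q : ℝ} (hf : ContinuousOn f (Icc a b)) (hab : a ≤ b)
    (hp : p ∈ Icc a b) (hq : q ∈ Icc a b) :
    ‖∫ x in a..b, f x‖ ≤ ‖∫ x in a..p, f x‖ + ‖∫ x in p..q, f x‖ + ‖∫ x in q..b, f x‖ := by
  have hint : ∀ x ∈ Icc a b, ∀ y ∈ Icc a b, IntervalIntegrable f volume x y := fun x hx y hy ↦
    (hf.intervalIntegrable_of_Icc hab).mono_set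
      (uIcc_subset_uIcc (Icc_subset_uIcc hx) (Icc_subset_uIcc hy))
  have hb : b ∈ Icc a b := right_mem_Icc.2 hab
  rw [← integral_add_adjacent_intervals (hint a (left_mem_Icc.2 hab) p hp) (hint p hp b hb),
    ← integral_add_adjacent_intervals (hint p hp q hq) (hint q hq b hb), ← add_assoc]
  exact norm_add₃_le

theorem norm_integral_cexp_le_of_deriv_deriv_ge {a b lam : ℝ} (hab : a ≤ b) (hlam : 0 < lam)
    {h φ ψ : ℝ → ℝ} (hh : ∀ x ∈ Icc a b, HasDerivWithinAt h (φ x) (Icc a b) x)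
    (hφ : ∀ x ∈ Icc a b, HasDerivWithinAt φ (ψ x) (Icc a b) x)
    (hψ : ContinuousOn ψ (Icc a b)) (hψ_ge : ∀ x ∈ Icc a b, lam ≤ ψ x) :
    ‖∫ x in a..b, exp (I * h x)‖ ≤ 10 / √lam := by
  set δ := √lam
  have hδ : 0 < δ := Real.sqrt_pos.2 hlam
  have hδ_sq : δ ^ 2 = lam := Real.sq_sqrt hlam.le
  have hφc : ContinuousOn φ (Icc a b) := fun x hx ↦ (hφ x hx).continuousWithinAt
  have hgrowth := mul_sub_le_sub_of_hasDerivWithinAt_Icc hφ hψ_ge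
  have hmono : MonotoneOn φ (Icc a b) := fun x hx y hy hxy ↦ by
    nlinarith [hgrowth x hx y hy hxy]
  have hfirst_deriv_test : ∀ p ∈ Icc a b, ∀ q ∈ Icc a b, p ≤ q → (∀ x ∈ Icc p q, δ ≤ |φ x|) →
      ‖∫ x in p..q, exp (I * h x)‖ ≤ 4 / δ := by
    intro p hp q hq hpq hφ_ge
    have hsub : Icc p q ⊆ Icc a b := Icc_subset_Icc hp.1 hq.2
    exact norm_integral_cexp_le_of_abs_deriv_ge hpq hδ
      (fun x hx ↦ (hh x (hsub hx)).mono hsub) (fun x hx ↦ (hφ x (hsub hx)).mono hsub)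
      (hψ.mono hsub) (fun x hx ↦ hlam.le.trans (hψ_ge x (hsub hx))) hφ_ge
  have ha : a ∈ Icc a b := left_mem_Icc.2 hab
  have hb : b ∈ Icc a b := right_mem_Icc.2 hab
  obtain ⟨p, hp, hpa, hpb⟩ := hφc.exists_mem_Icc_crossing (y := -δ) hab
  obtain ⟨q, hq, hqa, hqb⟩ := hφc.exists_mem_Icc_crossing (y := δ) hab
  have hpq : p ≤ q := by
    by_contra! hqp
    rcases hpa with rfl | hpa
    · linarith [hq.1]
    rcases hqb with rfl | hqb
    · linarith [hp.2]
    linarith [hmono hq hp hqp.le]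
  have hleft : ‖∫ x in a..p, exp (I * h x)‖ ≤ 4 / δ := by
    rcases hpa with rfl | hpa
    · simpa using by positivity
    refine hfirst_deriv_test a ha p hp hp.1 fun x hx ↦ le_abs.2 (Or.inr ?_)
    linarith [hmono ⟨hx.1, hx.2.trans hp.2⟩ hp hx.2]
  have hright : ‖∫ x in q..b, exp (I * h x)‖ ≤ 4 / δ := by
    rcases hqb with rfl | hqb
    · simpa using by positivity
    refine hfirst_deriv_test q hq b hb hq.2 fun x hx ↦ le_abs.2 (Or.inl ?_)
    exact hqb.trans (hmono hq ⟨hq.1.trans hx.1, hx.2⟩ hx.1)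
  have hmid : ‖∫ x in p..q, exp (I * h x)‖ ≤ 2 / δ := by
    have hlen : lam * (q - p) ≤ 2 * δ := by
      rcases hpb with rfl | hpb
      · nlinarith [hq.2]
      rcases hqa with rfl | hqa
      · nlinarith [hp.1]
      linarith [hgrowth p hp q hq hpq]
    calc ‖∫ x in p..q, exp (I * h x)‖ ≤ 1 * |q - p| :=
          norm_integral_le_of_norm_le_const fun x _ ↦ (norm_exp_I_mul_ofReal _).le
      _ ≤ 2 / δ := by
          rw [one_mul, abs_of_nonneg (sub_nonneg.2 hpq), le_div_iff₀ hδ]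
          nlinarith
  calc ‖∫ x in a..b, exp (I * h x)‖ ≤ ‖∫ x in a..p, exp (I * h x)‖ +
        ‖∫ x in p..q, exp (I * h x)‖ + ‖∫ x in q..b, exp (I * h x)‖ :=
        norm_integral_le_add_add (fun z hz ↦
          ((hh z hz).ofReal_comp.const_mul I).cexp.continuousWithinAt) hab hp hq
    _ ≤ 4 / δ + 2 / δ + 4 / δ := by gcongr
    _ = 10 / δ := by ring

theorem ContDiffOn.hasDerivWithinAt_derivWithin_iteratedDerivWithin_two {𝕜 F : Type*}
    [NontriviallyNormedField 𝕜] [NormedAddCommGroup F] [NormedSpace 𝕜 F] {f : 𝕜 → F} {s : Set 𝕜}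
    {x : 𝕜} (hf : ContDiffOn 𝕜 2 f s) (hs : UniqueDiffOn 𝕜 s) (hx : x ∈ s) :
    HasDerivWithinAt (derivWithin f s) (iteratedDerivWithin 2 f s x) s x := by
  rw [iteratedDerivWithin_succ', iteratedDerivWithin_one]
  exact ((hf.derivWithin hs (m := 1) le_rfl).differentiableOn one_ne_zero x hx).hasDerivWithinAt

/-- Lemma 6.6: van der Corput-type bound for the primitive
H(k) = ∫₀^k e^{ih(s)} ds of an oscillatory exponential whose phase satisfies
h''(k) ≥ c₁ t ⟨k⟩^{-3} on [0,t]. -/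
theorem stmt_8 (c₁ : ℝ) (hc₁ : 0 < c₁) :
    ∃ c : ℝ, 0 < c ∧
      ∀ t : ℝ, 1 ≤ t →
      ∀ h : ℝ → ℝ, ContDiffOn ℝ 2 h (Set.Icc 0 t) →
        (∀ k ∈ Set.Icc (0 : ℝ) t,
          c₁ * t / Real.sqrt (1 + k ^ 2) ^ 3 ≤
            iteratedDerivWithin 2 h (Set.Icc 0 t) k) →
        ∀ k ∈ Set.Icc (0 : ℝ) t,
          ‖∫ s in (0 : ℝ)..k, Complex.exp (Complex.I * (h s : ℂ))‖ ≤
            c / Real.sqrt t * Real.sqrt (1 + k ^ 2) ^ ((3 : ℝ) / 2) := by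
  refine ⟨10 / √c₁, by positivity, fun t ht h hh hh'' k hk ↦ ?_⟩
  have hI : UniqueDiffOn ℝ (Icc 0 t) := uniqueDiffOn_Icc (by linarith)
  have hsub : Icc 0 k ⊆ Icc 0 t := Icc_subset_Icc_right hk.2
  have hx : 0 < √(1 + k ^ 2) := by positivity
  have hψ_ge : ∀ s ∈ Icc 0 k, c₁ * t / √(1 + k ^ 2) ^ 3 ≤ iteratedDerivWithin 2 h (Icc 0 t) s := by
    intro s hs
    refine le_trans ?_ (hh'' s (hsub hs))
    have : √(1 + s ^ 2) ≤ √(1 + k ^ 2) := Real.sqrt_le_sqrt (by nlinarith [hs.1, hs.2])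
    gcongr
  refine (norm_integral_cexp_le_of_deriv_deriv_ge hk.1 (by positivity)
    (fun s hs ↦ ((hh.differentiableOn two_ne_zero s (hsub hs)).hasDerivWithinAt).mono hsub)
    (fun s hs ↦ (hh.hasDerivWithinAt_derivWithin_iteratedDerivWithin_two hI (hsub hs)).mono hsub)
    ((hh.continuousOn_iteratedDerivWithin le_rfl hI).mono hsub) hψ_ge).trans_eq ?_
  have hx32 : √(√(1 + k ^ 2) ^ 3) = √(1 + k ^ 2) ^ ((3 : ℝ) / 2) := by
    rw [Real.sqrt_eq_rpow, ← Real.rpow_natCast, ← Real.rpow_mul hx.le]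
    norm_num
  rw [Real.sqrt_div' _ (by positivity), Real.sqrt_mul hc₁.le, hx32]
  field_simp
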